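/- If f and g are smooth non-constant real functions of one real variable such that f(θ_i(l))·g(l_j) = f(θ_j(l))·g(l_i) for all Euclidean triangles with side lengths l=(l₁,l₂,l₃) and opposite angles θ_i, then there exist constants λ and c₁, c₂ with f(t) = c₁ sin^λ(t) and g(t) = c₂ t^λ (on the relevant domains). -/

import Mathlib

open Real

/-- The angle opposite the side of length `a` in a Euclidean triangle with side
lengths `a`, `b`, `c`. -/
noncomputable def triAngle (a b c : ℝ) : ℝ :=
  Real.arccos ((b ^ 2 + c ^ 2 - a ^ 2) / (2 * b * c))

lemma sin_add_lt_aux {u v : ℝ} (hu : u ∈ Set.Ioo 0 π) (hv : v ∈ Set.Ioo 0 π) :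
    sin (u + v) < sin u + sin v := by
  have h1 : 0 < sin u := sin_pos_of_pos_of_lt_pi hu.1 hu.2
  have h2 : 0 < sin v := sin_pos_of_pos_of_lt_pi hv.1 hv.2
  have c1 : cos u < 1 := by
    have := Real.cos_lt_cos_of_nonneg_of_le_pi (le_refl 0) hu.2.le hu.1
    simpa using this
  have c2 : cos v ≤ 1 := cos_le_one v
  rw [sin_add]; nlinarith

lemma triAngle_eq_aux {α β D : ℝ} (hα : α ∈ Set.Ioo 0 π) (hβ : β ∈ Set.Ioo 0 π)
    (hs : α + β < π) (hD : 0 < D) :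
    triAngle (D * sin α) (D * sin β) (D * sin (π - α - β)) = α := by
  have hγ : sin (π - α - β) = sin (α + β) := by
    rw [show π - α - β = π - (α + β) by ring, sin_pi_sub]
  have h2 : 0 < sin β := sin_pos_of_pos_of_lt_pi hβ.1 hβ.2
  have h3 : 0 < sin (α + β) := sin_pos_of_pos_of_lt_pi (by linarith [hα.1, hβ.1]) hs
  have key : ((D * sin β) ^ 2 + (D * sin (π - α - β)) ^ 2 - (D * sin α) ^ 2) /
      (2 * (D * sin β) * (D * sin (π - α - β))) = cos α := by
    rw [hγ, div_eq_iff (by positivity), sin_add]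
    linear_combination (-(D^2) * sin β ^2) * (sin_sq_add_cos_sq α) +
      (D^2 * sin α ^2) * (sin_sq_add_cos_sq β)
  rw [triAngle, key, arccos_cos hα.1.le hα.2.le]

lemma FE_aux {f g : ℝ → ℝ}
    (hlaw : ∀ l1 l2 l3 : ℝ, 0 < l1 → 0 < l2 → 0 < l3 →
      l1 < l2 + l3 → l2 < l1 + l3 → l3 < l1 + l2 →
      f (triAngle l1 l2 l3) * g l2 = f (triAngle l2 l1 l3) * g l1 ∧
      f (triAngle l2 l1 l3) * g l3 = f (triAngle l3 l1 l2) * g l2)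
    {α β D : ℝ} (hα : α ∈ Set.Ioo 0 π) (hβ : β ∈ Set.Ioo 0 π)
    (hs : α + β < π) (hD : 0 < D) :
    f α * g (D * sin β) = f β * g (D * sin α) := by
  set γ := π - α - β with hγdef
  have hγ : γ ∈ Set.Ioo 0 π := ⟨by simp only [hγdef]; linarith,
    by simp only [hγdef]; linarith [hα.1, hβ.1]⟩
  have hsa : 0 < sin α := sin_pos_of_pos_of_lt_pi hα.1 hα.2
  have hsb : 0 < sin β := sin_pos_of_pos_of_lt_pi hβ.1 hβ.2
  have hsc : 0 < sin γ := sin_pos_of_pos_of_lt_pi hγ.1 hγ.2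
  have e1 : sin α = sin (β + γ) := by
    rw [show β + γ = π - α by rw [hγdef]; ring, sin_pi_sub]
  have e2 : sin β = sin (α + γ) := by
    rw [show α + γ = π - β by rw [hγdef]; ring, sin_pi_sub]
  have e3 : sin γ = sin (α + β) := by
    rw [show γ = π - (α + β) by rw [hγdef]; ring, sin_pi_sub]
  have t1 : D * sin α < D * sin β + D * sin γ := by
    have := sin_add_lt_aux hβ hγ; rw [e1]; nlinarith
  have t2 : D * sin β < D * sin α + D * sin γ := by
    have := sin_add_lt_aux hα hγ; rw [e2]; nlinarith
  have t3 : D * sin γ < D * sin α + D * sin β := by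
    have := sin_add_lt_aux hα hβ; rw [e3]; nlinarith
  obtain ⟨h1, -⟩ := hlaw (D * sin α) (D * sin β) (D * sin γ)
    (by positivity) (by positivity) (by positivity) t1 t2 t3
  have k1 : triAngle (D * sin α) (D * sin β) (D * sin γ) = α := triAngle_eq_aux hα hβ hs hD
  have k2 : triAngle (D * sin β) (D * sin α) (D * sin γ) = β := by
    have := triAngle_eq_aux hβ hα (by linarith) hD
    rwa [show π - β - α = γ by rw [hγdef]; ring] at this
  rw [k1, k2] at h1
  exact h1

/-- If a smooth function satisfies `x g'(x) = lam g(x)` on `(0,∞)` then it is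
`g(1) x ^ lam` there. -/
lemma pow_of_ODE_aux {g : ℝ → ℝ} (hg : ContDiff ℝ (⊤ : ℕ∞) g) (lam : ℝ)
    (hODE : ∀ x : ℝ, 0 < x → x * deriv g x = lam * g x) :
    ∀ x : ℝ, 0 < x → g x = g 1 * x ^ lam := by
  have hgd : Differentiable ℝ g := hg.differentiable (by simp)
  set h : ℝ → ℝ := fun x => g x * x ^ (-lam) with hh
  have hder : ∀ x : ℝ, 0 < x → HasDerivAt h 0 x := by
    intro x hx
    have hr : HasDerivAt (fun x : ℝ => x ^ (-lam)) (-lam * x ^ (-lam - 1)) x :=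
      Real.hasDerivAt_rpow_const (Or.inl hx.ne')
    have hd : HasDerivAt h (deriv g x * x ^ (-lam) + g x * (-lam * x ^ (-lam - 1))) x :=
      (hgd x).hasDerivAt.mul hr
    have e1 : x ^ (-lam) = x ^ (-lam - 1) * x := by
      rw [← Real.rpow_add_one hx.ne']; congr 1; ring
    have : deriv g x * x ^ (-lam) + g x * (-lam * x ^ (-lam - 1)) = 0 := by
      linear_combination (x ^ (-lam - 1)) * (hODE x hx) + (deriv g x) * e1
    rwa [this] at hd
  have hconst : ∀ x : ℝ, 0 < x → h x = h 1 := by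
    intro x hx
    refine Convex.is_const_of_fderivWithin_eq_zero (convex_Ioi (0:ℝ))
      (fun y hy => (hder y hy).differentiableAt.differentiableWithinAt)
      (fun y hy => ?_) hx (by norm_num)
    have h0 : HasFDerivAt h (0 : ℝ →L[ℝ] ℝ) y := by
      have hh0 := (hder y hy).hasFDerivAt
      rwa [show ContinuousLinearMap.toSpanSingleton ℝ (0:ℝ) = 0 from
        ContinuousLinearMap.ext fun z => by simp] at hh0
    exact h0.hasFDerivWithinAt.fderivWithin (isOpen_Ioi.uniqueDiffWithinAt hy)
  intro x hx
  have := hconst x hx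
  rw [hh] at this
  simp only [Real.one_rpow, mul_one] at this
  have hxl : (0:ℝ) < x ^ lam := Real.rpow_pos_of_pos hx _
  rw [Real.rpow_neg hx.le] at this
  field_simp at this
  linarith [this]

/-- Uniqueness of the sine law: if `f, g` are smooth functions, non-constant on the
relevant domains, with `f(θ_i) g(l_j) = f(θ_j) g(l_i)` for all Euclidean triangles
(`θ_i` the angle opposite `l_i`), then `f(t) = c₁ sin^λ t` and `g(t) = c₂ t^λ`. -/
theorem sine_law_uniqueness (f g : ℝ → ℝ)
    (hf : ContDiff ℝ (⊤ : ℕ∞) f) (hg : ContDiff ℝ (⊤ : ℕ∞) g)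
    (hfnc : ¬ ∃ c : ℝ, ∀ t ∈ Set.Ioo 0 π, f t = c)
    (hgnc : ¬ ∃ c : ℝ, ∀ t ∈ Set.Ioi (0 : ℝ), g t = c)
    (hlaw : ∀ l1 l2 l3 : ℝ, 0 < l1 → 0 < l2 → 0 < l3 →
      l1 < l2 + l3 → l2 < l1 + l3 → l3 < l1 + l2 →
      f (triAngle l1 l2 l3) * g l2 = f (triAngle l2 l1 l3) * g l1 ∧
      f (triAngle l2 l1 l3) * g l3 = f (triAngle l3 l1 l2) * g l2) :
    ∃ lam c1 c2 : ℝ,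
      (∀ t ∈ Set.Ioo 0 π, f t = c1 * sin t ^ lam) ∧
      (∀ t ∈ Set.Ioi (0 : ℝ), g t = c2 * t ^ lam) := by
  have hfd : Differentiable ℝ f := hf.differentiable (by simp)
  have hgd : Differentiable ℝ g := hg.differentiable (by simp)
  have FE : ∀ α β D : ℝ, α ∈ Set.Ioo 0 π → β ∈ Set.Ioo 0 π → α + β < π → 0 < D →
      f α * g (D * sin β) = f β * g (D * sin α) :=
    fun α β D hα hβ hs hD => FE_aux hlaw hα hβ hs hD
  -- there is a point where g is nonzero
  obtain ⟨x0, hx0, hgx0⟩ : ∃ x : ℝ, 0 < x ∧ g x ≠ 0 := by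
    by_contra hcon
    push_neg at hcon
    exact hgnc ⟨0, fun t ht => hcon t ht⟩
  -- there is a point in (0, π/2) where f is nonzero
  obtain ⟨α0, hα0, hfα0⟩ : ∃ α0 ∈ Set.Ioo 0 (π/2), f α0 ≠ 0 := by
    by_contra hcon
    push_neg at hcon
    refine hfnc ⟨0, fun t ht => ?_⟩
    set β := (π - t) / 2 with hβdef
    have hβ : β ∈ Set.Ioo 0 (π/2) :=
      ⟨by rw [hβdef]; linarith [ht.2], by rw [hβdef]; linarith [ht.1]⟩
    have hβπ : β ∈ Set.Ioo 0 π := ⟨hβ.1, by linarith [hβ.2, pi_pos]⟩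
    have hsb : 0 < sin β := sin_pos_of_pos_of_lt_pi hβπ.1 hβπ.2
    have hD : 0 < x0 / sin β := div_pos hx0 hsb
    have hDs : x0 / sin β * sin β = x0 := by field_simp
    have := FE t β (x0 / sin β) ht hβπ (by rw [hβdef]; linarith [ht.2]) hD
    rw [hDs, hcon β hβ, zero_mul] at this
    exact (mul_eq_zero.1 this).resolve_right hgx0
  -- the key differential relation
  have star : ∀ α ∈ Set.Ioo 0 (π/2), ∀ x : ℝ, 0 < x →
      deriv f α * sin α * g x = f α * cos α * (x * deriv g x) := by
    intro α hα x hx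
    have hsa : 0 < sin α := sin_pos_of_pos_of_lt_pi hα.1 (by linarith [hα.2, pi_pos])
    set D := x / sin α with hDdef
    have hD : 0 < D := div_pos hx hsa
    have hDs : D * sin α = x := by rw [hDdef]; field_simp
    have hαπ : α ∈ Set.Ioo 0 π := ⟨hα.1, by linarith [hα.2, pi_pos]⟩
    have h2 : HasDerivAt (fun a => f α * g (D * sin a))
        (f α * (deriv g x * (D * cos α))) α := by
      have hinner : HasDerivAt (fun a : ℝ => D * sin a) (D * cos α) α :=
        (hasDerivAt_sin α).const_mul D
      have houter : HasDerivAt g (deriv g x) (D * sin α) := by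
        rw [hDs]; exact (hgd x).hasDerivAt
      exact ((houter.comp α hinner).const_mul (f α))
    have h1 : HasDerivAt (fun a => f a * g x) (deriv f α * g x) α :=
      (hfd α).hasDerivAt.mul_const _
    have hev : (fun a => f a * g x) =ᶠ[nhds α] (fun a => f α * g (D * sin a)) := by
      filter_upwards [Ioo_mem_nhds (show (0:ℝ) < α from hα.1)
        (show α < π - α by linarith [hα.2])] with a (ha : a ∈ Set.Ioo 0 (π - α))
      have := FE a α D ⟨ha.1, by linarith [ha.2, hα.1]⟩ hαπ (by linarith [ha.2]) hD
      rw [hDs] at this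
      exact this
    have h1' : HasDerivAt (fun a => f α * g (D * sin a)) (deriv f α * g x) α :=
      h1.congr_of_eventuallyEq hev.symm
    have E : deriv f α * g x = f α * (deriv g x * (D * cos α)) := h1'.unique h2
    linear_combination (sin α) * E + (f α * cos α * deriv g x) * hDs
  -- extract the exponent
  have hcos : 0 < cos α0 :=
    Real.cos_pos_of_mem_Ioo ⟨by linarith [hα0.1, pi_pos], hα0.2⟩
  have hB : f α0 * cos α0 ≠ 0 := mul_ne_zero hfα0 hcos.ne'
  set lam := deriv f α0 * sin α0 / (f α0 * cos α0) with hlamdef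
  have hODE : ∀ x : ℝ, 0 < x → x * deriv g x = lam * g x := by
    intro x hx
    have hstar := star α0 hα0 x hx
    rw [hlamdef, div_mul_eq_mul_div, eq_div_iff hB]
    linear_combination -hstar
  have hgpow : ∀ x : ℝ, 0 < x → g x = g 1 * x ^ lam := pow_of_ODE_aux hg lam hODE
  have hc2 : g 1 ≠ 0 := by
    intro h0
    exact hgnc ⟨0, fun t ht => by rw [hgpow t ht, h0, zero_mul]⟩
  -- the relation for f on pairs
  have hP : ∀ α β : ℝ, α ∈ Set.Ioo 0 π → β ∈ Set.Ioo 0 π → α + β < π →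
      f α * sin β ^ lam = f β * sin α ^ lam := by
    intro α β hα hβ hs
    have := FE α β 1 hα hβ hs one_pos
    rw [one_mul, one_mul, hgpow (sin β) (sin_pos_of_pos_of_lt_pi hβ.1 hβ.2),
      hgpow (sin α) (sin_pos_of_pos_of_lt_pi hα.1 hα.2)] at this
    exact mul_left_cancel₀ hc2 (by linear_combination this)
  have hπ2 : (π/2 : ℝ) ∈ Set.Ioo 0 π := ⟨by positivity, by linarith [pi_pos]⟩
  refine ⟨lam, f (π/2), g 1, fun t ht => ?_, fun t ht => hgpow t ht⟩
  by_cases hlt : t + π/2 < π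
  · have h1 := hP t (π/2) ht hπ2 hlt
    rw [sin_pi_div_two, Real.one_rpow, mul_one] at h1
    exact h1
  · set γ := (π - t) / 2 with hγdef
    have hγ : γ ∈ Set.Ioo 0 π :=
      ⟨by rw [hγdef]; linarith [ht.2], by rw [hγdef]; linarith [ht.1, pi_pos]⟩
    have hγ2 : γ + π/2 < π := by rw [hγdef]; linarith [ht.1]
    have h1 := hP t γ ht hγ (by rw [hγdef]; linarith [ht.2])
    have h2 := hP γ (π/2) hγ hπ2 hγ2
    rw [sin_pi_div_two, Real.one_rpow, mul_one] at h2
    have hS : sin γ ^ lam ≠ 0 :=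
      (Real.rpow_pos_of_pos (sin_pos_of_pos_of_lt_pi hγ.1 hγ.2) _).ne'
    apply mul_right_cancel₀ hS
    linear_combination h1 + (sin t ^ lam) * h2
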